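/- There exists a function p : ℝ × {−ω₀, ω₀} → ℝ, 2π-periodic and C^∞ in θ for each ω, odd in the sense p(−θ, −ω) = −p(θ, ω), such that Lp(θ, ω) = ∂θq(θ, ω) for all θ ∈ ℝ and ω ∈ {−ω₀, ω₀}. (Existence of a nontrivial Jordan block of L at the eigenvalue 0.) -/

import Mathlib

noncomputable section

open MeasureTheory

/-- `G u ω x = x·cos u + 2ωu`. -/
def G (u ω x : ℝ) : ℝ := x * Real.cos u + 2 * ω * u

/-- The unnormalized stationary profile `S(θ, ω, x)`. -/
def S (θ ω x : ℝ) : ℝ :=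
  Real.exp (G θ ω x) *
    ((1 - Real.exp (4 * Real.pi * ω)) * (∫ u in (0:ℝ)..θ, Real.exp (-(G u ω x))) +
      Real.exp (4 * Real.pi * ω) * (∫ u in (0:ℝ)..(2 * Real.pi), Real.exp (-(G u ω x))))

/-- The normalization constant `Z(ω, x)`. -/
def Z (ω x : ℝ) : ℝ := ∫ θ in (0:ℝ)..(2 * Real.pi), S θ ω x

/-- `Ψ_μ` for the binary disorder law `μ = (1/2)(δ_{-ω₀} + δ_{ω₀})`. -/
def psiMu (ω₀ x : ℝ) : ℝ :=
  (1 / 2) * ((∫ θ in (0:ℝ)..(2 * Real.pi), Real.cos θ * S θ (-ω₀) x) / Z (-ω₀) x +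
    (∫ θ in (0:ℝ)..(2 * Real.pi), Real.cos θ * S θ ω₀ x) / Z ω₀ x)

/-- The stationary density `q(θ, ω) = S(θ, ω, 2Kr)/Z(ω, 2Kr)`. -/
def q (K r θ ω : ℝ) : ℝ := S θ ω (2 * K * r) / Z ω (2 * K * r)

/-- `κ(ω) = (1 − exp(4πω))/(2 Z(ω, 2Kr))`. -/
def kap (K r ω : ℝ) : ℝ := (1 - Real.exp (4 * Real.pi * ω)) / (2 * Z ω (2 * K * r))

/-- The averaged convolution `⟨J∗h⟩_μ(θ)` for binary disorder. -/
def Jconv (K ω₀ : ℝ) (h : ℝ → ℝ → ℝ) (θ : ℝ) : ℝ :=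
  -(K / 2) * ((∫ φ in (0:ℝ)..(2 * Real.pi), Real.sin φ * h (θ - φ) (-ω₀)) +
    (∫ φ in (0:ℝ)..(2 * Real.pi), Real.sin φ * h (θ - φ) ω₀))

/-- The linearized evolution operator `L` around the stationary density `q`. -/
def Lop (K ω₀ r : ℝ) (h : ℝ → ℝ → ℝ) (θ ω : ℝ) : ℝ :=
  (1 / 2) * deriv (deriv (fun u => h u ω)) θ -
    deriv (fun u => h u ω * (Jconv K ω₀ (q K r) u + ω) + q K r u ω * Jconv K ω₀ h u) θ

/-!
Write `x = 2Kr` and `G' = -x sin θ + 2ω`. The fixed-point equation gives `⟨J∗q⟩_μ = -Kr sin θ`,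
so for `h` with `⟨J∗h⟩_μ = 0` one has `L h = ½ (h' - G' h)'`. Hence every periodic `p` with
`p' = G' p + 2q + c` and `⟨J∗p⟩_μ = 0` satisfies `L p = q'`.

Periodic solutions of `y' = G' y + (1 - e^{4πω}) f` are window integrals
`e^{G(θ)} ∫_{θ-2π}^{θ} e^{-G} f`, and `S` is the one with `f = 1`. The change of variables
`θ ↦ -θ`, `ω ↦ -ω` makes `p` odd, which cancels the cosine modes of `⟨J∗p⟩_μ`; the constant `c`
is chosen to cancel the sine mode. This needs `∫ sin·S ≠ 0`: integrating `S'` and `(log S)'`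
over a period gives `x ∫ sin·S = 2ω (Z - 2πc₀)` and `c₀ ∫ 1/S = 2π` for
`c₀ = (e^{4πω} - 1)/(2ω)`, whence `Z - 2πc₀ = ∫ (S - c₀)²/S > 0`, as `S` is not constant.
-/

open Real

section PeriodicIntegral

theorem Function.Periodic.intervalIntegral_comp_neg {f : ℝ → ℝ} {T : ℝ}
    (hf : Function.Periodic f T) : ∫ u in (0:ℝ)..T, f (-u) = ∫ u in (0:ℝ)..T, f u := by
  rw [intervalIntegral.integral_comp_neg, neg_zero]
  simpa using hf.intervalIntegral_add_eq (-T) 0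

theorem integral_sin_mul_comp_sub {h : ℝ → ℝ} (hc : Continuous h)
    (hp : Function.Periodic h (2 * π)) (θ : ℝ) :
    ∫ φ in (0:ℝ)..(2 * π), sin φ * h (θ - φ) =
      sin θ * (∫ u in (0:ℝ)..(2 * π), cos u * h u) -
        cos θ * ∫ u in (0:ℝ)..(2 * π), sin u * h u := by
  have hper : Function.Periodic (fun u => sin (θ - u) * h u) (2 * π) := fun u => by
    simp only [sub_add_eq_sub_sub, sin_sub_two_pi, hp u]
  calc ∫ φ in (0:ℝ)..(2 * π), sin φ * h (θ - φ)
      = ∫ u in (θ - 2 * π)..θ, sin (θ - u) * h u := by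
        simpa using intervalIntegral.integral_comp_sub_left
          (fun u => sin (θ - u) * h u) θ (a := 0) (b := 2 * π)
    _ = ∫ u in (0:ℝ)..(2 * π), sin (θ - u) * h u := by
        simpa using hper.intervalIntegral_add_eq (θ - 2 * π) 0
    _ = ∫ u in (0:ℝ)..(2 * π), (sin θ * (cos u * h u) - cos θ * (sin u * h u)) :=
        intervalIntegral.integral_congr fun u _ => by simp only [sin_sub]; ring
    _ = _ := by
        rw [intervalIntegral.integral_sub ((by fun_prop : Continuous _).intervalIntegrable _ _)
          ((by fun_prop : Continuous _).intervalIntegrable _ _),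
          intervalIntegral.integral_const_mul, intervalIntegral.integral_const_mul]

theorem hasDerivAt_integral_window {φ : ℝ → ℝ} (hφ : Continuous φ) (T θ : ℝ) :
    HasDerivAt (fun t => ∫ w in (t - T)..t, φ w) (φ θ - φ (θ - T)) θ := by
  have hprim (t : ℝ) : HasDerivAt (fun s => ∫ w in (0:ℝ)..s, φ w) (φ t) t :=
    intervalIntegral.integral_hasDerivAt_right (hφ.intervalIntegrable _ _)
      (hφ.stronglyMeasurableAtFilter _ _) hφ.continuousAt
  have hwindow : (fun t => ∫ w in (t - T)..t, φ w) =
      fun t => (∫ w in (0:ℝ)..t, φ w) - ∫ w in (0:ℝ)..(t - T), φ w := by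
    funext t
    rw [intervalIntegral.integral_interval_sub_left (hφ.intervalIntegrable _ _)
      (hφ.intervalIntegrable _ _)]
  rw [hwindow]
  exact (hprim θ).sub (by simpa using (hprim (θ - T)).comp_sub_const θ T)

theorem contDiff_integral_window {φ : ℝ → ℝ} (hφ : ContDiff ℝ (⊤ : ℕ∞) φ) (T : ℝ) :
    ContDiff ℝ (⊤ : ℕ∞) (fun t => ∫ w in (t - T)..t, φ w) := by
  have hd (θ : ℝ) := hasDerivAt_integral_window hφ.continuous T θ
  rw [contDiff_infty_iff_deriv]
  refine ⟨fun θ => (hd θ).differentiableAt, ?_⟩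
  rw [funext fun θ => (hd θ).deriv]
  exact hφ.sub (hφ.comp (contDiff_id.sub contDiff_const))

end PeriodicIntegral

section ExpWindowIntegral

/-- For `g (u + T) = g u + a` and `T`-periodic `f`, this is the `T`-periodic solution of
`y' = g' y + (1 - e^a) f`. -/
def expWindowIntegral (g f : ℝ → ℝ) (T θ : ℝ) : ℝ :=
  exp (g θ) * ∫ w in (θ - T)..θ, exp (-g w) * f w

variable {g f : ℝ → ℝ} {T a : ℝ}

theorem integral_exp_neg_mul_sub_period (hg : ∀ u, g (u + T) = g u + a)
    (hf : Function.Periodic f T) (s t : ℝ) :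
    ∫ w in (s - T)..(t - T), exp (-g w) * f w = exp a * ∫ w in s..t, exp (-g w) * f w := by
  rw [← intervalIntegral.integral_comp_sub_right, ← intervalIntegral.integral_const_mul]
  refine intervalIntegral.integral_congr fun w _ => ?_
  have hgw : g (w - T) = g w - a := by
    have := hg (w - T); rw [sub_add_cancel] at this; linarith
  simp only [hgw, hf.sub_eq, neg_sub, ← mul_assoc, ← exp_add]
  ring_nf

theorem expWindowIntegral_periodic (hg : ∀ u, g (u + T) = g u + a)
    (hf : Function.Periodic f T) : Function.Periodic (expWindowIntegral g f T) T := by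
  intro θ
  have hshift := integral_exp_neg_mul_sub_period hg hf θ (θ + T)
  rw [add_sub_cancel_right] at hshift
  rw [expWindowIntegral, expWindowIntegral, add_sub_cancel_right, hg, hshift, exp_add]
  ring

theorem expWindowIntegral_comp_neg {g' f' : ℝ → ℝ} (hg : ∀ u, g (u + T) = g u + a)
    (hf : Function.Periodic f T) (hg' : ∀ u, g' (-u) = g u) (hf' : ∀ u, f' (-u) = f u)
    (θ : ℝ) : expWindowIntegral g' f' T (-θ) = exp (-a) * expWindowIntegral g f T θ := by
  have hflip : ∫ w in (-θ - T)..(-θ), exp (-g' w) * f' w =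
      ∫ w in θ..(θ + T), exp (-g w) * f w := by
    rw [← neg_add', ← intervalIntegral.integral_comp_neg]
    simp only [hg', hf']
  have hshift := integral_exp_neg_mul_sub_period hg hf θ (θ + T)
  rw [add_sub_cancel_right] at hshift
  rw [expWindowIntegral, expWindowIntegral, hg', hflip, hshift]
  have hinv : exp (-a) * exp a = 1 := by rw [← exp_add]; simp
  linear_combination (-(exp (g θ) * ∫ w in θ..(θ + T), exp (-g w) * f w)) * hinv

theorem hasDerivAt_expWindowIntegral (hg : ∀ u, g (u + T) = g u + a)
    (hf : Function.Periodic f T) (hgd : Differentiable ℝ g) (hfc : Continuous f) (θ : ℝ) :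
    HasDerivAt (expWindowIntegral g f T)
      (deriv g θ * expWindowIntegral g f T θ + (1 - exp a) * f θ) θ := by
  have hφ : Continuous fun w => exp (-g w) * f w := by
    have := hgd.continuous; fun_prop
  have hd := ((hgd θ).hasDerivAt.exp).mul (hasDerivAt_integral_window hφ T θ)
  refine hd.congr_deriv ?_
  have hgθ : g (θ - T) = g θ - a := by
    have := hg (θ - T); rw [sub_add_cancel] at this; linarith
  rw [expWindowIntegral, hgθ, hf.sub_eq, neg_sub]
  have hexp : exp (g θ) * exp (a - g θ) = exp a := by rw [← exp_add]; ring_nf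
  have hone : exp (g θ) * exp (-g θ) = 1 := by rw [← exp_add]; simp
  linear_combination (f θ) * hone - (f θ) * hexp

theorem contDiff_expWindowIntegral (hg : ContDiff ℝ (⊤ : ℕ∞) g)
    (hf : ContDiff ℝ (⊤ : ℕ∞) f) : ContDiff ℝ (⊤ : ℕ∞) (expWindowIntegral g f T) :=
  (contDiff_exp.comp hg).mul
    (contDiff_integral_window ((contDiff_exp.comp hg.neg).mul hf) T)

end ExpWindowIntegral

section Profile

variable (ω x : ℝ)

theorem G_add_two_pi (u : ℝ) : G (u + 2 * π) ω x = G u ω x + 4 * π * ω := by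
  rw [G, G, cos_add_two_pi]; ring

theorem G_neg (u : ℝ) : G (-u) (-ω) x = G u ω x := by
  rw [G, G, cos_neg]; ring

theorem hasDerivAt_G (θ : ℝ) : HasDerivAt (fun u => G u ω x) (-(x * sin θ) + 2 * ω) θ := by
  unfold G
  exact (((hasDerivAt_cos θ).const_mul x).add ((hasDerivAt_id θ).const_mul (2 * ω))).congr_deriv
    (by ring)

theorem contDiff_G : ContDiff ℝ (⊤ : ℕ∞) (fun u => G u ω x) := by
  unfold G; fun_prop

theorem S_eq_expWindowIntegral :
    (fun θ => S θ ω x) = expWindowIntegral (fun u => G u ω x) (fun _ => 1) (2 * π) := by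
  funext θ
  have hint (a b : ℝ) : IntervalIntegrable (fun w => exp (-G w ω x)) volume a b :=
    (by unfold G; fun_prop : Continuous _).intervalIntegrable a b
  have hshift := integral_exp_neg_mul_sub_period (g := fun u => G u ω x)
    (f := fun _ => 1) (G_add_two_pi ω x) (fun _ => rfl) θ (2 * π)
  simp only [mul_one, sub_self] at hshift
  rw [S, expWindowIntegral]
  simp only [mul_one]
  rw [← intervalIntegral.integral_add_adjacent_intervals (hint (θ - 2 * π) 0) (hint 0 θ), hshift,
    ← intervalIntegral.integral_interval_sub_left (hint 0 (2 * π)) (hint 0 θ)]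
  ring

theorem S_pos (θ : ℝ) : 0 < S θ ω x := by
  rw [congrFun (S_eq_expWindowIntegral ω x), expWindowIntegral]
  refine mul_pos (exp_pos _) (intervalIntegral.intervalIntegral_pos_of_pos_on ?_
    (fun w _ => by positivity) (by linarith [pi_pos]))
  exact (by unfold G; fun_prop : Continuous _).intervalIntegrable _ _

theorem S_periodic : Function.Periodic (fun θ => S θ ω x) (2 * π) := by
  rw [S_eq_expWindowIntegral]
  exact expWindowIntegral_periodic (G_add_two_pi ω x) (fun _ => rfl)

theorem S_neg (θ : ℝ) : S (-θ) (-ω) x = exp (-(4 * π * ω)) * S θ ω x := by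
  rw [congrFun (S_eq_expWindowIntegral (-ω) x), congrFun (S_eq_expWindowIntegral ω x)]
  exact expWindowIntegral_comp_neg (G_add_two_pi ω x) (fun _ => rfl) (G_neg ω x) (fun _ => rfl) θ

theorem hasDerivAt_S (θ : ℝ) :
    HasDerivAt (fun θ => S θ ω x)
      ((-(x * sin θ) + 2 * ω) * S θ ω x + (1 - exp (4 * π * ω))) θ := by
  have h := hasDerivAt_expWindowIntegral (g := fun u => G u ω x) (f := fun _ => 1)
    (G_add_two_pi ω x) (fun _ => rfl) (fun u => (hasDerivAt_G ω x u).differentiableAt)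
    continuous_const θ
  rwa [← S_eq_expWindowIntegral, (hasDerivAt_G ω x θ).deriv, mul_one] at h

theorem contDiff_S : ContDiff ℝ (⊤ : ℕ∞) (fun θ => S θ ω x) := by
  rw [S_eq_expWindowIntegral]
  exact contDiff_expWindowIntegral (contDiff_G ω x) contDiff_const

theorem Z_neg : Z (-ω) x = exp (-(4 * π * ω)) * Z ω x := by
  have hflip := (S_periodic ω x).intervalIntegral_comp_neg
  rw [Z, Z, ← hflip, ← intervalIntegral.integral_const_mul]
  refine intervalIntegral.integral_congr fun θ _ => ?_
  simpa using S_neg ω x (-θ)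

end Profile

section StationaryDensity

variable (K r : ℝ)

theorem q_periodic (ω : ℝ) : Function.Periodic (fun θ => q K r θ ω) (2 * π) := fun θ => by
  simp only [q, S_periodic ω (2 * K * r) θ]

theorem q_neg (θ ω : ℝ) : q K r (-θ) (-ω) = q K r θ ω := by
  rw [q, q, S_neg, Z_neg, mul_div_mul_left _ _ (exp_ne_zero _)]

theorem contDiff_q (ω : ℝ) : ContDiff ℝ (⊤ : ℕ∞) (fun θ => q K r θ ω) :=
  (contDiff_S ω (2 * K * r)).div_const _

end StationaryDensity

section FirstFourierModes

def cosCoeff (h : ℝ → ℝ → ℝ) (ω : ℝ) : ℝ := ∫ u in (0:ℝ)..(2 * π), cos u * h u ω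

def sinCoeff (h : ℝ → ℝ → ℝ) (ω : ℝ) : ℝ := ∫ u in (0:ℝ)..(2 * π), sin u * h u ω

variable {h : ℝ → ℝ → ℝ}

theorem Jconv_eq_cosCoeff_sinCoeff (K ω₀ : ℝ) (hc : ∀ ω, Continuous fun u => h u ω)
    (hp : ∀ ω, Function.Periodic (fun u => h u ω) (2 * π)) (θ : ℝ) :
    Jconv K ω₀ h θ = -(K / 2) * (sin θ * (cosCoeff h (-ω₀) + cosCoeff h ω₀) -
      cos θ * (sinCoeff h (-ω₀) + sinCoeff h ω₀)) := by
  rw [Jconv, integral_sin_mul_comp_sub (hc _) (hp _), integral_sin_mul_comp_sub (hc _) (hp _),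
    cosCoeff, cosCoeff, sinCoeff, sinCoeff]
  ring

variable {ε : ℝ} (hp : ∀ ω, Function.Periodic (fun u => h u ω) (2 * π))
  (hsym : ∀ u ω, h (-u) (-ω) = ε * h u ω)
include hp hsym

theorem cosCoeff_neg (ω : ℝ) : cosCoeff h (-ω) = ε * cosCoeff h ω := by
  have hper : Function.Periodic (fun u => cos u * h u (-ω)) (2 * π) := fun u => by
    simp only [cos_add_two_pi, hp (-ω) u]
  rw [cosCoeff, ← hper.intervalIntegral_comp_neg, cosCoeff,
    ← intervalIntegral.integral_const_mul]
  refine intervalIntegral.integral_congr fun u _ => ?_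
  simp only [cos_neg, hsym]
  ring

theorem sinCoeff_neg (ω : ℝ) : sinCoeff h (-ω) = -ε * sinCoeff h ω := by
  have hper : Function.Periodic (fun u => sin u * h u (-ω)) (2 * π) := fun u => by
    simp only [sin_add_two_pi, hp (-ω) u]
  rw [sinCoeff, ← hper.intervalIntegral_comp_neg, sinCoeff,
    ← intervalIntegral.integral_const_mul]
  refine intervalIntegral.integral_congr fun u _ => ?_
  simp only [sin_neg, hsym]
  ring

end FirstFourierModes

theorem Jconv_q {K ω₀ r : ℝ} (hfix : r = psiMu ω₀ (2 * K * r)) (θ : ℝ) :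
    Jconv K ω₀ (q K r) θ = -(K * r) * sin θ := by
  have hcos : cosCoeff (q K r) (-ω₀) + cosCoeff (q K r) ω₀ = 2 * r := by
    simp only [cosCoeff, q, mul_div_assoc', intervalIntegral.integral_div]
    rw [psiMu] at hfix
    linarith
  have hsin := sinCoeff_neg (q_periodic K r) (ε := 1) (by simpa using q_neg K r) ω₀
  rw [Jconv_eq_cosCoeff_sinCoeff K ω₀ (fun ω => (contDiff_q K r ω).continuous) (q_periodic K r),
    hcos, hsin]
  ring

section SineCoefficient

theorem integral_eq_zero_of_hasDerivAt_of_periodic {F f : ℝ → ℝ} {T : ℝ}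
    (hF : ∀ θ, HasDerivAt F (f θ) θ) (hf : Continuous f) (hper : Function.Periodic F T) :
    ∫ θ in (0:ℝ)..T, f θ = 0 := by
  rw [intervalIntegral.integral_eq_sub_of_hasDerivAt (fun θ _ => hF θ) (hf.intervalIntegrable _ _),
    ← zero_add T, hper, sub_self]

variable (ω x : ℝ)

theorem mul_integral_sin_mul_S :
    x * ∫ u in (0:ℝ)..(2 * π), sin u * S u ω x =
      2 * ω * Z ω x + 2 * π * (1 - exp (4 * π * ω)) := by
  have hS := (contDiff_S ω x).continuous
  have h := integral_eq_zero_of_hasDerivAt_of_periodic (hasDerivAt_S ω x) (by fun_prop)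
    (S_periodic ω x)
  have hsplit : ∫ u in (0:ℝ)..(2 * π), ((-(x * sin u) + 2 * ω) * S u ω x + (1 - exp (4 * π * ω)))
      = -x * (∫ u in (0:ℝ)..(2 * π), sin u * S u ω x) + 2 * ω * Z ω x
        + 2 * π * (1 - exp (4 * π * ω)) := by
    rw [Z, ← intervalIntegral.integral_const_mul, ← intervalIntegral.integral_const_mul,
      ← intervalIntegral.integral_add ((by fun_prop : Continuous _).intervalIntegrable _ _)
        ((by fun_prop : Continuous _).intervalIntegrable _ _),
      intervalIntegral.integral_add ((by fun_prop : Continuous _).intervalIntegrable _ _)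
        intervalIntegrable_const, intervalIntegral.integral_const, smul_eq_mul, sub_zero]
    congr 2
    funext u
    ring
  linarith

theorem mul_integral_inv_S :
    (exp (4 * π * ω) - 1) * ∫ θ in (0:ℝ)..(2 * π), (S θ ω x)⁻¹ = 4 * π * ω := by
  have hS := (contDiff_S ω x).continuous
  have hSne (θ : ℝ) := (S_pos ω x θ).ne'
  have hinv : Continuous fun θ => (S θ ω x)⁻¹ := hS.inv₀ hSne
  have hlog (θ : ℝ) : HasDerivAt (fun θ => log (S θ ω x))
      (-(x * sin θ) + 2 * ω + (1 - exp (4 * π * ω)) * (S θ ω x)⁻¹) θ := by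
    refine ((hasDerivAt_S ω x θ).log (hSne θ)).congr_deriv ?_
    rw [add_div, mul_div_cancel_right₀ _ (hSne θ), div_eq_mul_inv]
  have h := integral_eq_zero_of_hasDerivAt_of_periodic hlog (by fun_prop)
    (fun θ => congrArg log (S_periodic ω x θ))
  rw [intervalIntegral.integral_add ((by fun_prop : Continuous _).intervalIntegrable _ _)
      ((by fun_prop : Continuous _).intervalIntegrable _ _),
    intervalIntegral.integral_add ((by fun_prop : Continuous _).intervalIntegrable _ _)
      intervalIntegrable_const,
    intervalIntegral.integral_neg, intervalIntegral.integral_const_mul,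
    intervalIntegral.integral_const_mul, integral_sin, cos_zero, cos_two_pi,
    intervalIntegral.integral_const, smul_eq_mul, intervalIntegral.integral_const_mul] at h
  linarith

/-- `c` is the constant value of `S (·) ω 0`. -/
theorem Z_sub_eq_integral_sq {c : ℝ} (hω : ω ≠ 0) (hc : 2 * ω * c = exp (4 * π * ω) - 1) :
    Z ω x - 2 * π * c = ∫ θ in (0:ℝ)..(2 * π), (S θ ω x - c) ^ 2 / S θ ω x := by
  have hS := (contDiff_S ω x).continuous
  have hinv : Continuous fun θ => (S θ ω x)⁻¹ := hS.inv₀ fun θ => (S_pos ω x θ).ne'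
  have hmean : c * ∫ θ in (0:ℝ)..(2 * π), (S θ ω x)⁻¹ = 2 * π := by
    refine mul_left_cancel₀ (mul_ne_zero two_ne_zero hω) ?_
    rw [← mul_assoc, hc, mul_integral_inv_S]
    ring
  have hexpand : ∫ θ in (0:ℝ)..(2 * π), (S θ ω x - c) ^ 2 / S θ ω x =
      ∫ θ in (0:ℝ)..(2 * π), (S θ ω x - 2 * c + c ^ 2 * (S θ ω x)⁻¹) :=
    intervalIntegral.integral_congr fun θ _ => by
      have := (S_pos ω x θ).ne'
      field_simp
      ring
  rw [hexpand, intervalIntegral.integral_add ((by fun_prop : Continuous _).intervalIntegrable _ _)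
      ((by fun_prop : Continuous _).intervalIntegrable _ _),
    intervalIntegral.integral_sub (hS.intervalIntegrable _ _) intervalIntegrable_const,
    intervalIntegral.integral_const, intervalIntegral.integral_const_mul, smul_eq_mul, Z]
  linear_combination (-c) * hmean

theorem exists_S_ne {c : ℝ} (hx : x ≠ 0) (hc0 : c ≠ 0) (hc : 2 * ω * c = exp (4 * π * ω) - 1) :
    ∃ θ ∈ Set.Icc 0 (2 * π), S θ ω x ≠ c := by
  by_contra! hconst
  have hmem : π / 2 ∈ Set.Ioo 0 (2 * π) := ⟨by positivity, by linarith [pi_pos]⟩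
  have hnear : (fun θ => S θ ω x) =ᶠ[nhds (π / 2)] fun _ => c :=
    Filter.eventually_of_mem (Ioo_mem_nhds hmem.1 hmem.2)
      fun θ hθ => hconst θ (Set.Ioo_subset_Icc_self hθ)
  have hderiv := (hasDerivAt_S ω x (π / 2)).unique
    ((hasDerivAt_const (π / 2) c).congr_of_eventuallyEq hnear)
  rw [sin_pi_div_two, hconst _ (Set.Ioo_subset_Icc_self hmem)] at hderiv
  exact mul_ne_zero hx hc0 (by linear_combination -hderiv + hc)

theorem integral_sin_mul_S_ne_zero (hω : ω ≠ 0) (hx : x ≠ 0) :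
    ∫ u in (0:ℝ)..(2 * π), sin u * S u ω x ≠ 0 := by
  obtain ⟨c, hc⟩ : ∃ c, 2 * ω * c = exp (4 * π * ω) - 1 :=
    ⟨_, mul_div_cancel₀ _ (mul_ne_zero two_ne_zero hω)⟩
  have hc0 : c ≠ 0 := by
    rintro rfl
    have : 4 * π * ω = 0 := exp_eq_one_iff _ |>.mp (by linarith)
    simp [pi_ne_zero, hω] at this
  have hS := (contDiff_S ω x).continuous
  obtain ⟨θ₀, hθ₀, hne⟩ := exists_S_ne ω x hx hc0 hc
  have hpos : 0 < Z ω x - 2 * π * c := by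
    rw [Z_sub_eq_integral_sq ω x hω hc]
    refine intervalIntegral.integral_pos (by linarith [pi_pos])
      (((hS.sub continuous_const).pow 2).div hS fun θ => (S_pos ω x θ).ne').continuousOn
      (fun θ _ => div_nonneg (sq_nonneg _) (S_pos ω x θ).le)
      ⟨θ₀, hθ₀, div_pos ((by have := sub_ne_zero.mpr hne; positivity)) (S_pos ω x θ₀)⟩
  intro h0
  have := mul_integral_sin_mul_S ω x
  rw [h0, mul_zero] at this
  have : 2 * ω * (Z ω x - 2 * π * c) = 0 := by linear_combination -this - 2 * π * hc
  exact mul_ne_zero (mul_ne_zero two_ne_zero hω) hpos.ne' this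

end SineCoefficient

section JordanVector

variable (K r ω₀ : ℝ)

def qWindow (θ ω : ℝ) : ℝ :=
  expWindowIntegral (fun u => G u ω (2 * K * r)) (fun w => 2 * q K r w ω) (2 * π) θ

theorem qWindow_periodic (ω : ℝ) : Function.Periodic (fun θ => qWindow K r θ ω) (2 * π) :=
  expWindowIntegral_periodic (G_add_two_pi ω _) fun θ => congrArg (2 * ·) (q_periodic K r ω θ)

theorem qWindow_neg (θ ω : ℝ) : qWindow K r (-θ) (-ω) = exp (-(4 * π * ω)) * qWindow K r θ ω :=
  expWindowIntegral_comp_neg (G_add_two_pi ω _) (fun θ => congrArg (2 * ·) (q_periodic K r ω θ))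
    (G_neg ω _) (fun u => by simp only [q_neg]) θ

theorem hasDerivAt_qWindow (ω θ : ℝ) :
    HasDerivAt (fun θ => qWindow K r θ ω)
      ((-(2 * K * r * sin θ) + 2 * ω) * qWindow K r θ ω +
        (1 - exp (4 * π * ω)) * (2 * q K r θ ω)) θ := by
  rw [← (hasDerivAt_G ω (2 * K * r) θ).deriv]
  exact hasDerivAt_expWindowIntegral (G_add_two_pi ω _)
    (fun θ => congrArg (2 * ·) (q_periodic K r ω θ))
    (fun u => (hasDerivAt_G ω _ u).differentiableAt)
    (continuous_const.mul (contDiff_q K r ω).continuous) θ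

theorem contDiff_qWindow (ω : ℝ) : ContDiff ℝ (⊤ : ℕ∞) (fun θ => qWindow K r θ ω) :=
  contDiff_expWindowIntegral (contDiff_G ω _) (contDiff_const.mul (contDiff_q K r ω))

def jordanShift : ℝ :=
  -sinCoeff (qWindow K r) ω₀ / sinCoeff (fun θ ω => S θ ω (2 * K * r)) ω₀

/-- A periodic solution of `p' = G' p + 2 q + c` with `c = jordanShift`; the shift is chosen so
that the first sine mode of `p` vanishes at `ω₀`, which makes `⟨J∗p⟩_μ = 0`. -/
def jordanVector (θ ω : ℝ) : ℝ :=
  (qWindow K r θ ω + jordanShift K r ω₀ * S θ ω (2 * K * r)) / (1 - exp (4 * π * ω))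

theorem jordanVector_periodic (ω : ℝ) :
    Function.Periodic (fun θ => jordanVector K r ω₀ θ ω) (2 * π) := fun θ => by
  simp only [jordanVector, qWindow_periodic K r ω θ, S_periodic ω _ θ]

theorem contDiff_jordanVector (ω : ℝ) :
    ContDiff ℝ (⊤ : ℕ∞) (fun θ => jordanVector K r ω₀ θ ω) :=
  ((contDiff_qWindow K r ω).add (contDiff_const.mul (contDiff_S ω _))).div_const _

theorem jordanVector_neg (θ ω : ℝ) : jordanVector K r ω₀ (-θ) (-ω) = -jordanVector K r ω₀ θ ω := by
  have hcoef : exp (-(4 * π * ω)) / (1 - exp (-(4 * π * ω))) = -(1 - exp (4 * π * ω))⁻¹ := by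
    rw [← mul_div_mul_left _ _ (exp_ne_zero (4 * π * ω)), ← exp_add, mul_sub, ← exp_add,
      add_neg_cancel, exp_zero, mul_one, ← neg_sub, div_neg, one_div]
  rw [jordanVector, jordanVector, qWindow_neg, S_neg, mul_neg, mul_left_comm, ← mul_add,
    mul_div_right_comm, hcoef]
  ring

theorem hasDerivAt_jordanVector {ω : ℝ} (hω : ω ≠ 0) (θ : ℝ) :
    HasDerivAt (fun θ => jordanVector K r ω₀ θ ω)
      ((-(2 * K * r * sin θ) + 2 * ω) * jordanVector K r ω₀ θ ω + 2 * q K r θ ω +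
        jordanShift K r ω₀) θ := by
  have hE : 1 - exp (4 * π * ω) ≠ 0 := by
    rw [sub_ne_zero, ne_comm, Ne, exp_eq_one_iff]
    exact mul_ne_zero (mul_ne_zero four_ne_zero pi_ne_zero) hω
  refine (((hasDerivAt_qWindow K r ω θ).add
    ((hasDerivAt_S ω _ θ).const_mul (jordanShift K r ω₀))).div_const _).congr_deriv ?_
  rw [jordanVector]
  generalize exp (4 * π * ω) = E at hE ⊢
  field_simp
  ring

theorem sinCoeff_jordanVector (hω₀ : ω₀ ≠ 0) (hx : 2 * K * r ≠ 0) :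
    sinCoeff (jordanVector K r ω₀) ω₀ = 0 := by
  have hW := (contDiff_qWindow K r ω₀).continuous
  have hS := (contDiff_S ω₀ (2 * K * r)).continuous
  have hsplit : sinCoeff (jordanVector K r ω₀) ω₀ =
      (sinCoeff (qWindow K r) ω₀ +
        jordanShift K r ω₀ * sinCoeff (fun θ ω => S θ ω (2 * K * r)) ω₀) /
        (1 - exp (4 * π * ω₀)) := by
    rw [sinCoeff, sinCoeff, sinCoeff, ← intervalIntegral.integral_const_mul,
      ← intervalIntegral.integral_add ((by fun_prop : Continuous _).intervalIntegrable _ _)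
        ((by fun_prop : Continuous _).intervalIntegrable _ _),
      ← intervalIntegral.integral_div]
    refine intervalIntegral.integral_congr fun u _ => ?_
    simp only [jordanVector]
    ring
  have hS0 : sinCoeff (fun θ ω => S θ ω (2 * K * r)) ω₀ ≠ 0 :=
    integral_sin_mul_S_ne_zero ω₀ _ hω₀ hx
  rw [hsplit, jordanShift, div_mul_cancel₀ _ hS0,
    add_neg_cancel, zero_div]

theorem Jconv_jordanVector (hω₀ : ω₀ ≠ 0) (hx : 2 * K * r ≠ 0) (θ : ℝ) :
    Jconv K ω₀ (jordanVector K r ω₀) θ = 0 := by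
  have hodd : ∀ u ω, jordanVector K r ω₀ (-u) (-ω) = -1 * jordanVector K r ω₀ u ω := by
    simpa using jordanVector_neg K r ω₀
  rw [Jconv_eq_cosCoeff_sinCoeff K ω₀ (fun ω => (contDiff_jordanVector K r ω₀ ω).continuous)
      (jordanVector_periodic K r ω₀),
    cosCoeff_neg (jordanVector_periodic K r ω₀) hodd,
    sinCoeff_neg (jordanVector_periodic K r ω₀) hodd, sinCoeff_jordanVector K r ω₀ hω₀ hx]
  ring

end JordanVector

theorem half_deriv_deriv_sub_deriv_mul {p a q : ℝ → ℝ} {c : ℝ}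
    (hp : ∀ u, HasDerivAt p (a u * p u + 2 * q u + c) u) (ha : Differentiable ℝ a)
    (hq : Differentiable ℝ q) (θ : ℝ) :
    1 / 2 * deriv (deriv p) θ - deriv (fun u => p u * (a u / 2)) θ = deriv q θ := by
  have hap : HasDerivAt (fun u => a u * p u) (deriv (fun u => a u * p u) θ) θ :=
    ((ha θ).mul (hp θ).differentiableAt).hasDerivAt
  have hhalf : (fun u => p u * (a u / 2)) = fun u => a u * p u / 2 := by
    funext u; ring
  have hderiv : HasDerivAt (fun u => a u * p u + 2 * q u + c)
      (deriv (fun u => a u * p u) θ + 2 * deriv q θ) θ :=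
    (hap.add ((hq θ).hasDerivAt.const_mul 2)).add_const c
  rw [funext fun u => (hp u).deriv, hhalf, (hap.div_const 2).deriv, hderiv.deriv]
  ring

/-- Existence of a nontrivial Jordan block of `L` at the eigenvalue `0`: there is a
`2π`-periodic, smooth-in-`θ`, odd function `p` solving `Lp = ∂θq`. -/
theorem stmt6 (K ω₀ r : ℝ) (hK : 0 < K) (hω₀ : 0 < ω₀) (hr : 0 < r)
    (hfix : r = psiMu ω₀ (2 * K * r)) :
    ∃ p : ℝ → ℝ → ℝ,
      (∀ ω ∈ ({-ω₀, ω₀} : Set ℝ),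
        Function.Periodic (fun θ => p θ ω) (2 * Real.pi) ∧
          ContDiff ℝ (⊤ : ℕ∞) (fun θ => p θ ω)) ∧
      (∀ θ : ℝ, ∀ ω ∈ ({-ω₀, ω₀} : Set ℝ), p (-θ) (-ω) = -p θ ω) ∧
      ∀ θ : ℝ, ∀ ω ∈ ({-ω₀, ω₀} : Set ℝ),
        Lop K ω₀ r p θ ω = deriv (fun u => q K r u ω) θ := by
  have hx : 2 * K * r ≠ 0 := by positivity
  refine ⟨jordanVector K r ω₀,
    fun ω _ => ⟨jordanVector_periodic K r ω₀ ω, contDiff_jordanVector K r ω₀ ω⟩,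
    fun θ ω _ => jordanVector_neg K r ω₀ θ ω, fun θ ω hω => ?_⟩
  have hω0 : ω ≠ 0 := by rcases hω with rfl | rfl <;> simp [hω₀.ne']
  have hflux : (fun u => jordanVector K r ω₀ u ω * (Jconv K ω₀ (q K r) u + ω) +
        q K r u ω * Jconv K ω₀ (jordanVector K r ω₀) u) =
      fun u => jordanVector K r ω₀ u ω * ((-(2 * K * r * sin u) + 2 * ω) / 2) := by
    funext u
    rw [Jconv_q hfix, Jconv_jordanVector K r ω₀ hω₀.ne' hx]
    ring
  rw [Lop, hflux]
  exact half_deriv_deriv_sub_deriv_mul (hasDerivAt_jordanVector K r ω₀ hω0)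
    (by fun_prop) ((contDiff_q K r ω).differentiable (by simp)) θ
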